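/- Let p > 0, p_L, ε₁, ε₂ be reals with ε₂ ≥ 0 and 0 < ε₁ < p_L. Then for every real p̂_L with |p̂_L − p_L| ≤ ε₁ and every real δ with |δ| ≤ ε₂, one has |(p/p̂_L + δ)·p_L − p| ≤ p·ε₁/(p_L − ε₁) + p_L·ε₂. -/

import Mathlib

/-! If `q` is within `ε` of `r` and `ε < r`, then `q ≥ r - ε > 0`, so the relative error
`(r - q) / q` of using `p / q` in place of `p / r` is at most `ε / (r - ε)`. The perturbation `δ`
of the conditional quantile contributes `δ * r` additively, and the triangle inequality combines
the two errors. -/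

lemma abs_div_mul_sub_le {p q r ε : ℝ} (hp : 0 ≤ p) (hq : |q - r| ≤ ε) (hε : ε < r) :
    |p / q * r - p| ≤ p * ε / (r - ε) := by
  have hq_lower : r - ε ≤ q := by linarith [(abs_le.mp hq).1]
  have hq_pos : 0 < q := by linarith
  have hrε : 0 < r - ε := by linarith
  calc |p / q * r - p| = p * |r - q| / q := by
        rw [show p / q * r - p = p * (r - q) / q by field_simp,
          abs_div, abs_mul, abs_of_nonneg hp, abs_of_pos hq_pos]
    _ ≤ p * ε / (r - ε) := by
        rw [abs_sub_comm] at hq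
        have hε_nonneg : 0 ≤ ε := (abs_nonneg _).trans hq
        gcongr

lemma abs_mul_le_mul_of_abs_le {δ r ε : ℝ} (hr : 0 ≤ r) (hδ : |δ| ≤ ε) : |δ * r| ≤ r * ε := by
  rw [abs_mul, abs_of_nonneg hr, mul_comm]
  gcongr

theorem iterative_error_bound_general_general
    (p p_L ε₁ ε₂ : ℝ) (hp : 0 < p)
    (hε₁ : ε₁ < p_L) :
    ∀ phatL : ℝ, |phatL - p_L| ≤ ε₁ → ∀ δ : ℝ, |δ| ≤ ε₂ →
      |(p / phatL + δ) * p_L - p| ≤ p * ε₁ / (p_L - ε₁) + p_L * ε₂ := by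
  intro phatL hphatL δ hδ
  have hp_L : 0 ≤ p_L := by linarith [(abs_nonneg _).trans hphatL]
  calc |(p / phatL + δ) * p_L - p| = |(p / phatL * p_L - p) + δ * p_L| := by congr 1; ring
    _ ≤ |p / phatL * p_L - p| + |δ * p_L| := abs_add_le _ _
    _ ≤ p * ε₁ / (p_L - ε₁) + p_L * ε₂ :=
        add_le_add (abs_div_mul_sub_le hp.le hphatL hε₁) (abs_mul_le_mul_of_abs_le hp_L hδ)

theorem iterative_error_bound_general
    (p p_L ε₁ ε₂ : ℝ) (hp : 0 < p) (hε₂ : 0 ≤ ε₂) (hε₁0 : 0 < ε₁)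
    (hε₁ : ε₁ < p_L) :
    ∀ phatL : ℝ, |phatL - p_L| ≤ ε₁ → ∀ δ : ℝ, |δ| ≤ ε₂ →
      |(p / phatL + δ) * p_L - p| ≤ p * ε₁ / (p_L - ε₁) + p_L * ε₂ :=
  iterative_error_bound_general_general p p_L ε₁ ε₂ hp hε₁
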